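/- arXiv:1611.06116 — 4 statements merged into one kernel-verified Lean document; each statement's English description precedes it below -/
import Mathlib

section
/- Let n ≥ 1, let M ∈ M_{n×n}(ℤ) be symmetric and positive definite, let B ∈ M_{n×n}(ℤ), and let w, s ∈ ℤⁿ with each sᵢ ≠ 0. Assume y ∈ 𝓜_{B,w}^{s}. Let d be the smallest positive integer such that d·y ∈ 𝓜_{B,0}^{s}, and let V ∈ M_{n×n}(ℤ) be a matrix whose columns form a ℤ-basis of the ℤ-module ℤy + 𝓜_{B,0}^{s}. Then for every integer a, the number of x ∈ ℤⁿ with xᵗ(VᵗMV)x = a equals the sum over k = 0, 1, …, d−1 of the number of x ∈ 𝓜_{B,kw}^{s} with xᵗMx = a. -/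
open Matrix

lemma fin_aux (n : ℕ) (M : Matrix (Fin n) (Fin n) ℤ) (hMsymm : M.IsSymm)
    (hMpos : ∀ x : Fin n → ℤ, x ≠ 0 → 0 < x ⬝ᵥ M.mulVec x) (a : ℤ) :
    {x : Fin n → ℤ | x ⬝ᵥ M.mulVec x = a}.Finite := by
  have hnonneg : ∀ v : Fin n → ℤ, 0 ≤ v ⬝ᵥ M.mulVec v := by
    intro v
    rcases eq_or_ne v 0 with h | h
    · simp [h]
    · exact (hMpos v h).le
  have hsymm : ∀ u v : Fin n → ℤ, u ⬝ᵥ M.mulVec v = v ⬝ᵥ M.mulVec u := by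
    intro u v
    rw [Matrix.dotProduct_mulVec, ← Matrix.mulVec_transpose, hMsymm.eq,
      dotProduct_comm]
  -- Cauchy–Schwarz bound on coordinates of M.mulVec x
  have key : ∀ x : Fin n → ℤ, x ⬝ᵥ M.mulVec x = a → ∀ i,
      M.mulVec x i ∈ Set.Icc (-(M i i * a)) (M i i * a) := by
    intro x hx i
    set e : Fin n → ℤ := Pi.single i 1 with he
    have hee : e ⬝ᵥ M.mulVec e = M i i := by
      simp [he, Matrix.mulVec_single, single_dotProduct, dotProduct_single]
    have hex : e ⬝ᵥ M.mulVec x = M.mulVec x i := by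
      simp [he, single_dotProduct]
    have hg : 0 < M i i := by
      rw [← hee]; exact hMpos e (by simp [he, Pi.single_eq_same, Function.ne_iff])
    set g := M i i
    set t := M.mulVec x i with ht
    have h0 : 0 ≤ (g • x - t • e) ⬝ᵥ M.mulVec (g • x - t • e) := hnonneg _
    have hexp : (g • x - t • e) ⬝ᵥ M.mulVec (g • x - t • e) = g * (g * a - t * t) := by
      have hxe : x ⬝ᵥ M.mulVec e = t := by rw [hsymm, hex]
      rw [Matrix.mulVec_sub, Matrix.mulVec_smul, Matrix.mulVec_smul,
        sub_dotProduct, smul_dotProduct, smul_dotProduct,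
        dotProduct_sub, dotProduct_sub, dotProduct_smul,
        dotProduct_smul, dotProduct_smul, dotProduct_smul]
      simp only [smul_eq_mul]
      rw [hx, hee, hex, hxe]; ring
    have ht2 : t * t ≤ g * a := by nlinarith [hexp ▸ h0]
    constructor <;> nlinarith [sq_nonneg (t - 1), sq_nonneg (t + 1)]
  have hT : (Set.pi Set.univ fun i => Set.Icc (-(M i i * a)) (M i i * a)).Finite :=
    Set.Finite.pi fun i => Set.finite_Icc _ _
  have hinj : Function.Injective M.mulVec := by
    intro u v huv
    by_contra h
    have : u - v ≠ 0 := sub_ne_zero.mpr h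
    have := hMpos (u - v) this
    rw [Matrix.mulVec_sub, huv, sub_self] at this
    simp at this
  exact (hT.preimage hinj.injOn).subset fun x hx i _ => key x hx i


theorem stmt_6 (n : ℕ) (hn : 1 ≤ n)
    (M B : Matrix (Fin n) (Fin n) ℤ)
    (hMsymm : M.IsSymm)
    (hMpos : ∀ x : Fin n → ℤ, x ≠ 0 → 0 < x ⬝ᵥ M.mulVec x)
    (w s : Fin n → ℤ) (hs : ∀ i, s i ≠ 0)
    (y : Fin n → ℤ) (hy : ∀ i, s i ∣ (B.mulVec y - w) i)
    -- `d` is the smallest positive integer with `d • y ∈ 𝓜_{B,0}^{s}`: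
    (d : ℕ)
    (hd : IsLeast {d' : ℕ | 0 < d' ∧ ∀ i, s i ∣ B.mulVec ((d' : ℤ) • y) i} d)
    (V : Matrix (Fin n) (Fin n) ℤ)
    -- the columns of `V` form a ℤ-basis of `ℤy + 𝓜_{B,0}^{s}`:
    (hVmem : ∀ z : Fin n → ℤ, ∃ c : ℤ, ∀ i, s i ∣ B.mulVec (V.mulVec z - c • y) i)
    (hVspan : ∀ x : Fin n → ℤ, (∃ c : ℤ, ∀ i, s i ∣ B.mulVec (x - c • y) i) →
      ∃ z : Fin n → ℤ, V.mulVec z = x)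
    (hVinj : Function.Injective V.mulVec)
    (a : ℤ) :
    Nat.card {z : Fin n → ℤ // z ⬝ᵥ (Vᵀ * M * V).mulVec z = a} =
      ∑ k ∈ Finset.range d,
        Nat.card {x : Fin n → ℤ //
          (∀ i, s i ∣ (B.mulVec x - (k : ℤ) • w) i) ∧ x ⬝ᵥ M.mulVec x = a} := by
  classical
  have hdpos : 0 < d := hd.1.1
  have hdy := hd.1.2
  set P : (Fin n → ℤ) → Prop := fun x => ∃ c : ℤ, ∀ i, s i ∣ B.mulVec (x - c • y) i with hP
  set Q : ℕ → (Fin n → ℤ) → Prop :=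
    fun k x => ∀ i, s i ∣ (B.mulVec x - (k : ℤ) • w) i with hQ
  -- basic divisibility facts
  have hdw : ∀ i, s i ∣ (d : ℤ) * w i := by
    intro i
    have h1 : s i ∣ (d : ℤ) * B.mulVec y i := by
      have := hdy i
      rwa [Matrix.mulVec_smul, Pi.smul_apply, smul_eq_mul] at this
    have h2 : s i ∣ (d : ℤ) * (B.mulVec y - w) i := (hy i).mul_left _
    have : (d : ℤ) * w i = (d : ℤ) * B.mulVec y i - (d : ℤ) * (B.mulVec y - w) i := by
      simp [Pi.sub_apply]; ring
    rw [this]; exact dvd_sub h1 h2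
  -- from c-congruence to k-congruence
  have fwd : ∀ x : Fin n → ℤ, P x → ∃ k, k < d ∧ Q k x := by
    rintro x ⟨c, hc⟩
    refine ⟨(c % d).toNat, ?_, ?_⟩
    · have h1 : c % (d : ℤ) < d := Int.emod_lt_of_pos c (by exact_mod_cast hdpos)
      omega
    · intro i
      have hk : ((c % (d : ℤ)).toNat : ℤ) = c % d :=
        Int.toNat_of_nonneg (Int.emod_nonneg c (by exact_mod_cast hdpos.ne'))
      have hck : c - ((c % (d : ℤ)).toNat : ℤ) = (c / d) * d := by
        rw [hk]; rw [Int.emod_def]; ring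
      have hid : (B.mulVec x - (((c % (d : ℤ)).toNat : ℤ)) • w) i =
          B.mulVec (x - c • y) i + c * (B.mulVec y - w) i
            + (c / d) * ((d : ℤ) * w i) := by
        have : (c / (d:ℤ)) * ((d : ℤ) * w i) = (c - ((c % (d : ℤ)).toNat : ℤ)) * w i := by
          rw [hck]; ring
        rw [this]
        simp only [Matrix.mulVec_sub, Matrix.mulVec_smul, Pi.sub_apply, Pi.smul_apply,
          smul_eq_mul]
        ring
      rw [hid]
      exact dvd_add (dvd_add (hc i) ((hy i).mul_left c)) ((hdw i).mul_left _)
  have bwd : ∀ (k : ℕ) (x : Fin n → ℤ), Q k x → P x := by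
    intro k x hQk
    refine ⟨(k : ℤ), fun i => ?_⟩
    have hid : B.mulVec (x - (k : ℤ) • y) i =
        (B.mulVec x - (k : ℤ) • w) i - (k : ℤ) * (B.mulVec y - w) i := by
      simp only [Matrix.mulVec_sub, Matrix.mulVec_smul, Pi.sub_apply, Pi.smul_apply,
        smul_eq_mul]
      ring
    rw [hid]
    exact dvd_sub (hQk i) ((hy i).mul_left _)
  -- uniqueness of k
  have uniq : ∀ (k k' : ℕ) (x : Fin n → ℤ), k < d → k' < d → Q k x → Q k' x → k = k' := by
    have aux : ∀ (k k' : ℕ) (x : Fin n → ℤ), k' < k → k < d → Q k x → Q k' x → False := by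
      intro k k' x hlt hkd hQk hQk'
      set m : ℕ := k - k' with hm
      have hm0 : 0 < m := by omega
      have hmd : m < d := by omega
      have hmem : ∀ i, s i ∣ B.mulVec ((m : ℤ) • y) i := by
        intro i
        have h1 : s i ∣ (m : ℤ) * w i := by
          have h2 : s i ∣ ((k : ℤ) - k') * w i := by
            have := dvd_sub (hQk' i) (hQk i)
            have hid : (B.mulVec x - (k' : ℤ) • w) i - (B.mulVec x - (k : ℤ) • w) i
                = ((k : ℤ) - k') * w i := by
              simp only [Pi.sub_apply, Pi.smul_apply, smul_eq_mul]; ring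
            rwa [hid] at this
          have : ((k : ℤ) - k') = (m : ℤ) := by push_cast; omega
          rwa [this] at h2
        have hid : B.mulVec ((m : ℤ) • y) i =
            (m : ℤ) * (B.mulVec y - w) i + (m : ℤ) * w i := by
          simp only [Matrix.mulVec_smul, Pi.smul_apply, Pi.sub_apply, smul_eq_mul]; ring
        rw [hid]
        exact dvd_add ((hy i).mul_left _) h1
      have := hd.2 ⟨hm0, hmem⟩
      omega
    intro k k' x hk hk' h1 h2
    rcases lt_trichotomy k k' with h | h | h
    · exact absurd (aux k' k x h hk' h2 h1) not_false
    · exact h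
    · exact absurd (aux k k' x h hk h1 h2) not_false
  -- quadratic form identity
  have hq' : ∀ z : Fin n → ℤ,
      z ⬝ᵥ (Vᵀ * M * V).mulVec z = (V.mulVec z) ⬝ᵥ M.mulVec (V.mulVec z) := by
    intro z
    simp [← Matrix.mulVec_mulVec, Matrix.dotProduct_mulVec, Matrix.vecMul_transpose]
  have hfin := fin_aux n M hMsymm hMpos a
  set S := hfin.toFinset with hS
  have card_eq : ∀ (p : (Fin n → ℤ) → Prop) (inst : DecidablePred p),
      Nat.card {x : Fin n → ℤ // p x ∧ x ⬝ᵥ M.mulVec x = a}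
        = (@Finset.filter _ p inst S).card := by
    intro p inst
    have hset : {x : Fin n → ℤ | p x ∧ x ⬝ᵥ M.mulVec x = a} = ↑(@Finset.filter _ p inst S) := by
      ext x; simp [hS, Set.Finite.mem_toFinset, and_comm]
    calc Nat.card {x : Fin n → ℤ // p x ∧ x ⬝ᵥ M.mulVec x = a}
        = {x : Fin n → ℤ | p x ∧ x ⬝ᵥ M.mulVec x = a}.ncard := Nat.card_coe_set_eq _
      _ = (@Finset.filter _ p inst S).card := by rw [hset, Set.ncard_coe_finset]
  have lhs_eq : Nat.card {z : Fin n → ℤ // z ⬝ᵥ (Vᵀ * M * V).mulVec z = a}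
      = Nat.card {x : Fin n → ℤ // P x ∧ x ⬝ᵥ M.mulVec x = a} := by
    refine Nat.card_congr (Equiv.ofBijective
      (fun z => ⟨V.mulVec z.1, hVmem z.1, by rw [← hq']; exact z.2⟩) ⟨?_, ?_⟩)
    · rintro ⟨z1, h1⟩ ⟨z2, h2⟩ h
      exact Subtype.ext (hVinj (congrArg Subtype.val h))
    · rintro ⟨x, hPx, hxa⟩
      obtain ⟨z, hz⟩ := hVspan x hPx
      exact ⟨⟨z, by rw [hq', hz]; exact hxa⟩, Subtype.ext hz⟩
  rw [lhs_eq, card_eq P (Classical.decPred P)]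
  have hsplit : @Finset.filter _ P (Classical.decPred P) S
      = (Finset.range d).biUnion (fun k => S.filter (Q k)) := by
    ext x
    simp only [Finset.mem_filter, Finset.mem_biUnion, Finset.mem_range]
    constructor
    · rintro ⟨hxS, hPx⟩
      obtain ⟨k, hk, hQk⟩ := fwd x hPx
      exact ⟨k, hk, hxS, hQk⟩
    · rintro ⟨k, hk, hxS, hQk⟩
      exact ⟨hxS, bwd k x hQk⟩
  rw [hsplit, Finset.card_biUnion]
  · refine Finset.sum_congr rfl fun k hk => ?_
    exact (card_eq (Q k) inferInstance).symm
  · intro k hk k' hk' hkk'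
    simp only [Finset.disjoint_left, Finset.mem_filter]
    rintro x ⟨hxS, hQk⟩ ⟨_, hQk'⟩
    exact hkk' (uniq k k' x (Finset.mem_range.1 hk) (Finset.mem_range.1 hk') hQk hQk')
end

section
/- Let n ≥ 1, let M ∈ M_{n×n}(ℤ) be symmetric and positive definite, let B ∈ M_{n×n}(ℤ), and let w, s ∈ ℤⁿ with each sᵢ ≠ 0. Assume y ∈ 𝓜_{B,w}^{s}, let U ∈ M_{n×n}(ℤ) have columns forming a ℤ-basis of 𝓜_{B,0}^{s}, and let V ∈ M_{n×n}(ℤ) have columns forming a ℤ-basis of ℤy + 𝓜_{B,0}^{s}. If the smallest positive integer d with d·y ∈ 𝓜_{B,0}^{s} equals 2, then for every integer a the number of x ∈ 𝓜_{B,w}^{s} with xᵗMx = a equals the number of z ∈ ℤⁿ with zᵗ(VᵗMV)z = a minus the number of z ∈ ℤⁿ with zᵗ(UᵗMU)z = a. -/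
/-!
Since `2y ∈ 𝓜_{B,0}^s` but `y ∉ 𝓜_{B,0}^s`, the lattice `ℤy + 𝓜_{B,0}^s` is the disjoint union of
`𝓜_{B,0}^s` and the coset `y + 𝓜_{B,0}^s = 𝓜_{B,w}^s`. The injective parametrisations `z ↦ Uz`
and `z ↦ Vz` turn the representation numbers of `UᵀMU` and `VᵀMV` into counts of vectors of these
lattices on the level set `xᵀMx = a`, and that level set is finite: over `ℝ` the form is
nonnegative by density of `ℚⁿ`, nondegenerate because `det M ≠ 0`, hence positive definite, so it
dominates `c‖x‖²` by compactness of the unit sphere.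
-/

open Matrix

namespace AddSubgroup

variable {G : Type*} [AddCommGroup G] (H : AddSubgroup G) {y : G}

theorem setOf_exists_sub_zsmul_mem_eq_union (h2y : (2 : ℤ) • y ∈ H) :
    {x | ∃ c : ℤ, x - c • y ∈ H} = (H : Set G) ∪ {x | x - y ∈ H} := by
  ext x
  constructor
  · rintro ⟨c, hc⟩
    obtain ⟨q, rfl | rfl⟩ := c.even_or_odd'
    · left
      have hx : x - (2 * q) • y + q • (2 : ℤ) • y = x := by module
      exact hx ▸ H.add_mem hc (H.zsmul_mem h2y q)
    · right
      show x - y ∈ H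
      have hx : x - (2 * q + 1) • y + q • (2 : ℤ) • y = x - y := by module
      exact hx ▸ H.add_mem hc (H.zsmul_mem h2y q)
  · rintro (hx | hx)
    · exact ⟨0, by simpa using hx⟩
    · exact ⟨1, by simpa using hx⟩

theorem ncard_setOf_exists_sub_zsmul_mem_inter (h2y : (2 : ℤ) • y ∈ H) (hy : y ∉ H)
    {S : Set G} (hS : S.Finite) :
    ({x | ∃ c : ℤ, x - c • y ∈ H} ∩ S).ncard =
      ((H : Set G) ∩ S).ncard + ({x | x - y ∈ H} ∩ S).ncard := by
  rw [H.setOf_exists_sub_zsmul_mem_eq_union h2y, Set.union_inter_distrib_right]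
  refine Set.ncard_union_eq ?_ (hS.inter_of_right _) (hS.inter_of_right _)
  exact Set.disjoint_left.mpr fun x ⟨hx, _⟩ ⟨hxy, _⟩ => hy (by simpa using H.sub_mem hx hxy)

end AddSubgroup

namespace Matrix

variable {ι : Type*} [Fintype ι]

section CommRing

variable {R : Type*} [CommRing R]

def quadLevelSet (M : Matrix ι ι R) (a : R) : Set (ι → R) :=
  {x | x ⬝ᵥ M *ᵥ x = a}

theorem preimage_mulVec_quadLevelSet (M V : Matrix ι ι R) (a : R) :
    V.mulVec ⁻¹' quadLevelSet M a = quadLevelSet (Vᵀ * M * V) a := by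
  ext z
  simp [quadLevelSet, ← mulVec_mulVec, dotProduct_mulVec, vecMul_transpose]

theorem natCard_transpose_mul_mul_eq_ncard_range_inter {V : Matrix ι ι R}
    (hV : Function.Injective V.mulVec) (M : Matrix ι ι R) (a : R) :
    Nat.card {z : ι → R // z ⬝ᵥ (Vᵀ * M * V) *ᵥ z = a} =
      (Set.range V.mulVec ∩ quadLevelSet M a).ncard := by
  rw [← Set.ncard_preimage_of_injective_subset_range hV Set.inter_subset_left,
    Set.preimage_range_inter, preimage_mulVec_quadLevelSet]
  rfl

theorem smul_dotProduct_mulVec_smul (A : Matrix ι ι R) (t : R) (x : ι → R) :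
    t • x ⬝ᵥ A *ᵥ (t • x) = t ^ 2 * (x ⬝ᵥ A *ᵥ x) := by
  simp only [smul_dotProduct, mulVec_smul, dotProduct_smul, smul_eq_mul]
  ring

theorem intCast_dotProduct_mulVec (M : Matrix ι ι ℤ) (x : ι → ℤ) :
    ((x ⬝ᵥ M *ᵥ x : ℤ) : R) = Int.cast ∘ x ⬝ᵥ M.map Int.cast *ᵥ (Int.cast ∘ x) := by
  simp [dotProduct, mulVec]

end CommRing

theorem PosDef.exists_pos_mul_sq_norm_le {A : Matrix ι ι ℝ} (hA : A.PosDef) :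
    ∃ c > 0, ∀ x, c * ‖x‖ ^ 2 ≤ x ⬝ᵥ A *ᵥ x := by
  rcases subsingleton_or_nontrivial (ι → ℝ) with h | h
  · exact ⟨1, one_pos, fun x => by simp [Subsingleton.elim x 0]⟩
  obtain ⟨x₀, hx₀, hmin⟩ := (isCompact_sphere (0 : ι → ℝ) 1).exists_isMinOn
    (NormedSpace.sphere_nonempty.mpr zero_le_one)
    (by fun_prop : Continuous fun x : ι → ℝ => x ⬝ᵥ A *ᵥ x).continuousOn
  refine ⟨_, by simpa using hA.dotProduct_mulVec_pos (ne_zero_of_mem_unit_sphere ⟨x₀, hx₀⟩),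
    fun x => ?_⟩
  rcases eq_or_ne x 0 with rfl | hx
  · simp
  have hx_sphere : ‖x‖⁻¹ • x ∈ Metric.sphere (0 : ι → ℝ) 1 := by
    simpa using norm_smul_inv_norm (𝕜 := ℝ) hx
  have hle : x₀ ⬝ᵥ A *ᵥ x₀ ≤ ‖x‖⁻¹ • x ⬝ᵥ A *ᵥ (‖x‖⁻¹ • x) := hmin hx_sphere
  rwa [smul_dotProduct_mulVec_smul, inv_pow, inv_mul_eq_div, le_div_iff₀ (by positivity)] at hle

theorem dotProduct_mulVec_map_intCast_nonneg {M : Matrix ι ι ℤ}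
    (hM : ∀ x : ι → ℤ, 0 ≤ x ⬝ᵥ M *ᵥ x) (x : ι → ℝ) :
    0 ≤ x ⬝ᵥ M.map (Int.cast : ℤ → ℝ) *ᵥ x := by
  have hdense : DenseRange (fun q : ι → ℚ => ((↑) ∘ q : ι → ℝ)) :=
    DenseRange.piMap fun _ => Rat.denseRange_cast
  refine hdense.induction_on x (isClosed_le continuous_const (by fun_prop)) fun q => ?_
  obtain ⟨⟨b, hb0⟩, hb⟩ := IsLocalization.exist_integer_multiples_of_finite (nonZeroDivisors ℤ) q
  choose v hv using hb
  have hvq : ((↑) ∘ v : ι → ℝ) = (b : ℝ) • ((↑) ∘ q : ι → ℝ) := by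
    ext i
    simpa using congrArg (Rat.cast : ℚ → ℝ) (hv i)
  have hb_sq : (0 : ℝ) < (b : ℝ) ^ 2 := by
    have : b ≠ 0 := nonZeroDivisors.ne_zero hb0
    positivity
  have hQv : (0 : ℝ) ≤ (v ⬝ᵥ M *ᵥ v : ℤ) := by exact_mod_cast hM v
  rw [intCast_dotProduct_mulVec, hvq, smul_dotProduct_mulVec_smul] at hQv
  exact nonneg_of_mul_nonneg_right (by simpa using hQv) hb_sq

section DecidableEq

variable [DecidableEq ι]

theorem posDef_map_intCast {M : Matrix ι ι ℤ} (hMsymm : M.IsSymm)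
    (hM : ∀ x : ι → ℤ, x ≠ 0 → 0 < x ⬝ᵥ M *ᵥ x) : (M.map (Int.cast : ℤ → ℝ)).PosDef := by
  have hnonneg (x : ι → ℤ) : 0 ≤ x ⬝ᵥ M *ᵥ x := by
    rcases eq_or_ne x 0 with rfl | hx
    · simp
    · exact (hM x hx).le
  have hpsd : (M.map (Int.cast : ℤ → ℝ)).PosSemidef :=
    posSemidef_iff_dotProduct_mulVec.mpr ⟨isHermitian_iff_isSymm.mpr (hMsymm.map _),
      fun x => by simpa using dotProduct_mulVec_map_intCast_nonneg hnonneg x⟩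
  have hdet : M.det ≠ 0 := fun h => by
    obtain ⟨v, hv, hMv⟩ := exists_mulVec_eq_zero_iff.mpr h
    simpa [hMv] using hM v hv
  rw [hpsd.posDef_iff_det_ne_zero, ← Int.cast_det]
  exact_mod_cast hdet

theorem finite_quadLevelSet {M : Matrix ι ι ℤ} (hMsymm : M.IsSymm)
    (hM : ∀ x : ι → ℤ, x ≠ 0 → 0 < x ⬝ᵥ M *ᵥ x) (a : ℤ) : (quadLevelSet M a).Finite := by
  obtain ⟨c, hc, hcQ⟩ := (posDef_map_intCast hMsymm hM).exists_pos_mul_sq_norm_le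
  refine ((isCompact_closedBall (0 : ι → ℤ) √(a / c)).finite_of_discrete).subset fun x hx => ?_
  have hnorm : ‖(Int.cast ∘ x : ι → ℝ)‖ = ‖x‖ := by
    simp only [Pi.norm_def, Function.comp_apply]
    congr
  have hxa : c * ‖x‖ ^ 2 ≤ a := by
    simpa [hnorm, ← intCast_dotProduct_mulVec, hx.out] using hcQ (Int.cast ∘ x)
  rw [mem_closedBall_zero_iff]
  exact Real.le_sqrt_of_sq_le ((le_div_iff₀' hc).mpr hxa)

end DecidableEq

def congrLattice (B : Matrix ι ι ℤ) (s : ι → ℤ) : AddSubgroup (ι → ℤ) where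
  carrier := {x | ∀ i, s i ∣ (B *ᵥ x) i}
  add_mem' hx hy i := by simpa [mulVec_add] using dvd_add (hx i) (hy i)
  zero_mem' i := by simp
  neg_mem' hx i := by simpa [mulVec_neg] using (hx i).neg_right

theorem mem_congrLattice {B : Matrix ι ι ℤ} {s x : ι → ℤ} :
    x ∈ congrLattice B s ↔ ∀ i, s i ∣ (B *ᵥ x) i :=
  Iff.rfl

theorem setOf_forall_dvd_mulVec_sub_eq {B : Matrix ι ι ℤ} {s w y : ι → ℤ}
    (hy : ∀ i, s i ∣ (B *ᵥ y - w) i) :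
    {x | ∀ i, s i ∣ (B *ᵥ x - w) i} = {x | x - y ∈ congrLattice B s} := by
  ext x
  refine forall_congr' fun i => ?_
  rw [show (B *ᵥ (x - y)) i = (B *ᵥ x - w) i - (B *ᵥ y - w) i by simp [mulVec_sub],
    dvd_sub_left (hy i)]

end Matrix

theorem stmt_8_general (n : ℕ)
    (M B : Matrix (Fin n) (Fin n) ℤ)
    (hMsymm : M.IsSymm)
    (hMpos : ∀ x : Fin n → ℤ, x ≠ 0 → 0 < x ⬝ᵥ M.mulVec x)
    (w s : Fin n → ℤ)
    (y : Fin n → ℤ) (hy : ∀ i, s i ∣ (B.mulVec y - w) i)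
    (U : Matrix (Fin n) (Fin n) ℤ)
    -- the columns of `U` form a ℤ-basis of `𝓜_{B,0}^{s}`:
    (hUmem : ∀ z : Fin n → ℤ, ∀ i, s i ∣ B.mulVec (U.mulVec z) i)
    (hUspan : ∀ x : Fin n → ℤ, (∀ i, s i ∣ B.mulVec x i) → ∃ z : Fin n → ℤ, U.mulVec z = x)
    (hUinj : Function.Injective U.mulVec)
    (V : Matrix (Fin n) (Fin n) ℤ)
    -- the columns of `V` form a ℤ-basis of `ℤy + 𝓜_{B,0}^{s}`:
    (hVmem : ∀ z : Fin n → ℤ, ∃ c : ℤ, ∀ i, s i ∣ B.mulVec (V.mulVec z - c • y) i)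
    (hVspan : ∀ x : Fin n → ℤ, (∃ c : ℤ, ∀ i, s i ∣ B.mulVec (x - c • y) i) →
      ∃ z : Fin n → ℤ, V.mulVec z = x)
    (hVinj : Function.Injective V.mulVec)
    -- the smallest positive integer `d` with `d • y ∈ 𝓜_{B,0}^{s}` equals 2:
    (hd : IsLeast {d' : ℕ | 0 < d' ∧ ∀ i, s i ∣ B.mulVec ((d' : ℤ) • y) i} 2)
    (a : ℤ) :
    (Nat.card {x : Fin n → ℤ //
        (∀ i, s i ∣ (B.mulVec x - w) i) ∧ x ⬝ᵥ M.mulVec x = a} : ℤ) =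
      (Nat.card {z : Fin n → ℤ // z ⬝ᵥ (Vᵀ * M * V).mulVec z = a} : ℤ) -
        (Nat.card {z : Fin n → ℤ // z ⬝ᵥ (Uᵀ * M * U).mulVec z = a} : ℤ) := by
  set H := congrLattice B s
  have hU : Set.range U.mulVec = H :=
    Set.ext fun x => ⟨by rintro ⟨z, rfl⟩; exact hUmem z, hUspan x⟩
  have hV : Set.range V.mulVec = {x | ∃ c : ℤ, x - c • y ∈ H} :=
    Set.ext fun x => ⟨by rintro ⟨z, rfl⟩; exact hVmem z, hVspan x⟩
  have hyH : y ∉ H := fun h => by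
    have := hd.2 ⟨one_pos, by simpa [H, mem_congrLattice] using h⟩
    omega
  have hW : Nat.card {x : Fin n → ℤ //
      (∀ i, s i ∣ (B.mulVec x - w) i) ∧ x ⬝ᵥ M.mulVec x = a} =
      ({x | x - y ∈ H} ∩ quadLevelSet M a).ncard := by
    rw [← setOf_forall_dvd_mulVec_sub_eq hy]
    rfl
  rw [hW, natCard_transpose_mul_mul_eq_ncard_range_inter hUinj,
    natCard_transpose_mul_mul_eq_ncard_range_inter hVinj, hU, hV,
    H.ncard_setOf_exists_sub_zsmul_mem_inter hd.1.2 hyH (finite_quadLevelSet hMsymm hMpos a)]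
  push_cast
  ring

theorem stmt_8 (n : ℕ) (hn : 1 ≤ n)
    (M B : Matrix (Fin n) (Fin n) ℤ)
    (hMsymm : M.IsSymm)
    (hMpos : ∀ x : Fin n → ℤ, x ≠ 0 → 0 < x ⬝ᵥ M.mulVec x)
    (w s : Fin n → ℤ) (hs : ∀ i, s i ≠ 0)
    (y : Fin n → ℤ) (hy : ∀ i, s i ∣ (B.mulVec y - w) i)
    (U : Matrix (Fin n) (Fin n) ℤ)
    -- the columns of `U` form a ℤ-basis of `𝓜_{B,0}^{s}`:
    (hUmem : ∀ z : Fin n → ℤ, ∀ i, s i ∣ B.mulVec (U.mulVec z) i)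
    (hUspan : ∀ x : Fin n → ℤ, (∀ i, s i ∣ B.mulVec x i) → ∃ z : Fin n → ℤ, U.mulVec z = x)
    (hUinj : Function.Injective U.mulVec)
    (V : Matrix (Fin n) (Fin n) ℤ)
    -- the columns of `V` form a ℤ-basis of `ℤy + 𝓜_{B,0}^{s}`:
    (hVmem : ∀ z : Fin n → ℤ, ∃ c : ℤ, ∀ i, s i ∣ B.mulVec (V.mulVec z - c • y) i)
    (hVspan : ∀ x : Fin n → ℤ, (∃ c : ℤ, ∀ i, s i ∣ B.mulVec (x - c • y) i) →
      ∃ z : Fin n → ℤ, V.mulVec z = x)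
    (hVinj : Function.Injective V.mulVec)
    -- the smallest positive integer `d` with `d • y ∈ 𝓜_{B,0}^{s}` equals 2:
    (hd : IsLeast {d' : ℕ | 0 < d' ∧ ∀ i, s i ∣ B.mulVec ((d' : ℤ) • y) i} 2)
    (a : ℤ) :
    (Nat.card {x : Fin n → ℤ //
        (∀ i, s i ∣ (B.mulVec x - w) i) ∧ x ⬝ᵥ M.mulVec x = a} : ℤ) =
      (Nat.card {z : Fin n → ℤ // z ⬝ᵥ (Vᵀ * M * V).mulVec z = a} : ℤ) -
        (Nat.card {z : Fin n → ℤ // z ⬝ᵥ (Uᵀ * M * U).mulVec z = a} : ℤ) :=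
  stmt_8_general n M B hMsymm hMpos w s y hy U hUmem hUspan hUinj V hVmem hVspan hVinj hd a
end

section
/- Let n ≥ 1, let M ∈ M_{n×n}(ℤ) be symmetric and positive definite, let B ∈ M_{n×n}(ℤ), and let w, s ∈ ℤⁿ with each sᵢ ≠ 0. Then for every integer a, the map x ↦ −x is a bijection from {x ∈ 𝓜_{B,w}^{s} : xᵗMx = a} onto {x ∈ 𝓜_{B,−w}^{s} : xᵗMx = a}. Moreover, if y ∈ 𝓜_{B,w}^{s}, U ∈ M_{n×n}(ℤ) has columns forming a ℤ-basis of 𝓜_{B,0}^{s}, V ∈ M_{n×n}(ℤ) has columns forming a ℤ-basis of ℤy + 𝓜_{B,0}^{s}, and the smallest positive integer d with d·y ∈ 𝓜_{B,0}^{s} equals 3, then the number of x ∈ 𝓜_{B,w}^{s} with xᵗMx = a equals one half of (the number of z ∈ ℤⁿ with zᵗ(VᵗMV)z = a minus the number of z ∈ ℤⁿ with zᵗ(UᵗMU)z = a). -/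
open Matrix

lemma qf_symm {n : ℕ} (M : Matrix (Fin n) (Fin n) ℤ) (hM : M.IsSymm) (x v : Fin n → ℤ) :
    x ⬝ᵥ M.mulVec v = v ⬝ᵥ M.mulVec x := by
  rw [Matrix.dotProduct_mulVec, ← Matrix.mulVec_transpose, hM.eq, dotProduct_comm]

lemma qf_nonneg {n : ℕ} (M : Matrix (Fin n) (Fin n) ℤ)
    (hMpos : ∀ x : Fin n → ℤ, x ≠ 0 → 0 < x ⬝ᵥ M.mulVec x) (x : Fin n → ℤ) :
    0 ≤ x ⬝ᵥ M.mulVec x := by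
  by_cases hx : x = 0
  · simp [hx]
  · exact (hMpos x hx).le

lemma qf_cs {n : ℕ} (M : Matrix (Fin n) (Fin n) ℤ) (hM : M.IsSymm)
    (hMpos : ∀ x : Fin n → ℤ, x ≠ 0 → 0 < x ⬝ᵥ M.mulVec x) (x v : Fin n → ℤ) :
    (x ⬝ᵥ M.mulVec v) ^ 2 ≤ (x ⬝ᵥ M.mulVec x) * (v ⬝ᵥ M.mulVec v) := by
  by_cases hx : x = 0
  · simpa [hx] using qf_nonneg M hMpos v
  · have hq0 : 0 < x ⬝ᵥ M.mulVec x := hMpos x hx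
    have key : 0 ≤ ((x ⬝ᵥ M.mulVec v) • x - (x ⬝ᵥ M.mulVec x) • v) ⬝ᵥ
        M.mulVec ((x ⬝ᵥ M.mulVec v) • x - (x ⬝ᵥ M.mulVec x) • v) := qf_nonneg M hMpos _
    have hsymm : v ⬝ᵥ M.mulVec x = x ⬝ᵥ M.mulVec v := qf_symm M hM v x
    rw [Matrix.mulVec_sub, Matrix.mulVec_smul, Matrix.mulVec_smul, sub_dotProduct,
      smul_dotProduct, smul_dotProduct, dotProduct_sub, dotProduct_sub,
      dotProduct_smul, dotProduct_smul, dotProduct_smul, dotProduct_smul, hsymm] at key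
    simp only [smul_eq_mul] at key
    nlinarith [key, hq0]

lemma qf_finite {n : ℕ} (M : Matrix (Fin n) (Fin n) ℤ) (hM : M.IsSymm)
    (hMpos : ∀ x : Fin n → ℤ, x ≠ 0 → 0 < x ⬝ᵥ M.mulVec x) (a : ℤ) :
    {x : Fin n → ℤ | x ⬝ᵥ M.mulVec x = a}.Finite := by
  have hinj : Function.Injective M.mulVec := by
    intro u v huv
    by_contra hne
    have h := hMpos (u - v) (sub_ne_zero.mpr hne)
    rw [Matrix.mulVec_sub, huv, sub_self, dotProduct_zero] at h
    exact lt_irrefl 0 h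
  have hsub : {x : Fin n → ℤ | x ⬝ᵥ M.mulVec x = a} ⊆
      M.mulVec ⁻¹' (Set.pi Set.univ fun i => Set.Icc (-(M i i * a)) (M i i * a)) := by
    intro x hx
    simp only [Set.mem_preimage, Set.mem_pi, Set.mem_univ, forall_true_left, Set.mem_Icc]
    intro i
    have hb : ((Pi.single i 1 : Fin n → ℤ) ⬝ᵥ M.mulVec x) ^ 2 ≤
        ((Pi.single i 1 : Fin n → ℤ) ⬝ᵥ M.mulVec (Pi.single i 1)) * (x ⬝ᵥ M.mulVec x) :=
      qf_cs M hM hMpos _ _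
    have h1 : (Pi.single i 1 : Fin n → ℤ) ⬝ᵥ M.mulVec x = M.mulVec x i := by
      simp [single_dotProduct]
    have h2 : (Pi.single i 1 : Fin n → ℤ) ⬝ᵥ M.mulVec (Pi.single i 1) = M i i := by
      simp [single_dotProduct, Matrix.mulVec_single, Matrix.mulVec]
    rw [h1, h2, hx] at hb
    have habs : |M.mulVec x i| ≤ M i i * a := by
      nlinarith [sq_abs (M.mulVec x i), abs_nonneg (M.mulVec x i),
        sq_nonneg (|M.mulVec x i| - 1)]
    exact abs_le.mp habs
  exact ((Set.Finite.pi fun i => Set.finite_Icc _ _).preimage hinj.injOn).subset hsub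

theorem stmt_9 (n : ℕ) (hn : 1 ≤ n)
    (M B : Matrix (Fin n) (Fin n) ℤ)
    (hMsymm : M.IsSymm)
    (hMpos : ∀ x : Fin n → ℤ, x ≠ 0 → 0 < x ⬝ᵥ M.mulVec x)
    (w s : Fin n → ℤ) (hs : ∀ i, s i ≠ 0)
    (a : ℤ) :
    -- the negation map is a bijection between the representation sets for `w` and `-w`:
    Set.BijOn (fun x : Fin n → ℤ => -x)
      {x : Fin n → ℤ | (∀ i, s i ∣ (B.mulVec x - w) i) ∧ x ⬝ᵥ M.mulVec x = a}
      {x : Fin n → ℤ | (∀ i, s i ∣ (B.mulVec x - (-w)) i) ∧ x ⬝ᵥ M.mulVec x = a} ∧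
    -- moreover, if `d = 3`, the count is half of the difference of the two counts:
    (∀ y : Fin n → ℤ, (∀ i, s i ∣ (B.mulVec y - w) i) →
      ∀ U V : Matrix (Fin n) (Fin n) ℤ,
      -- the columns of `U` form a ℤ-basis of `𝓜_{B,0}^{s}`:
      (∀ z : Fin n → ℤ, ∀ i, s i ∣ B.mulVec (U.mulVec z) i) →
      (∀ x : Fin n → ℤ, (∀ i, s i ∣ B.mulVec x i) → ∃ z : Fin n → ℤ, U.mulVec z = x) →
      Function.Injective U.mulVec →
      -- the columns of `V` form a ℤ-basis of `ℤy + 𝓜_{B,0}^{s}`: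
      (∀ z : Fin n → ℤ, ∃ c : ℤ, ∀ i, s i ∣ B.mulVec (V.mulVec z - c • y) i) →
      (∀ x : Fin n → ℤ, (∃ c : ℤ, ∀ i, s i ∣ B.mulVec (x - c • y) i) →
        ∃ z : Fin n → ℤ, V.mulVec z = x) →
      Function.Injective V.mulVec →
      -- the smallest positive integer `d` with `d • y ∈ 𝓜_{B,0}^{s}` equals 3:
      IsLeast {d' : ℕ | 0 < d' ∧ ∀ i, s i ∣ B.mulVec ((d' : ℤ) • y) i} 3 →
      (Nat.card {x : Fin n → ℤ //
          (∀ i, s i ∣ (B.mulVec x - w) i) ∧ x ⬝ᵥ M.mulVec x = a} : ℚ) =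
        ((Nat.card {z : Fin n → ℤ // z ⬝ᵥ (Vᵀ * M * V).mulVec z = a} : ℚ) -
          (Nat.card {z : Fin n → ℤ // z ⬝ᵥ (Uᵀ * M * U).mulVec z = a} : ℚ)) / 2) := by
  have hQneg : ∀ x : Fin n → ℤ, (-x) ⬝ᵥ M.mulVec (-x) = x ⬝ᵥ M.mulVec x := by
    intro x
    rw [Matrix.mulVec_neg, dotProduct_neg, neg_dotProduct, neg_neg]
  have hneg : ∀ (w' : Fin n → ℤ) (x : Fin n → ℤ), (∀ i, s i ∣ (B.mulVec x - w') i) →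
      ∀ i, s i ∣ (B.mulVec (-x) - (-w')) i := by
    intro w' x hx i
    have h : (B.mulVec (-x) - -w') i = -((B.mulVec x - w') i) := by
      simp [Matrix.mulVec_neg]
      ring
    rw [h]
    exact dvd_neg.mpr (hx i)
  constructor
  · refine ⟨?_, neg_injective.injOn, ?_⟩
    · rintro x ⟨h1, h2⟩
      exact ⟨hneg w x h1, by rw [hQneg, h2]⟩
    · rintro x ⟨h1, h2⟩
      refine ⟨-x, ⟨?_, by rw [hQneg, h2]⟩, by simp⟩
      have := hneg (-w) x h1
      simpa using this
  · intro y hy U V hU1 hU2 hU3 hV1 hV2 hV3 h3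
    -- basic closure properties of the predicate `PL`
    have hPLsub : ∀ u v : Fin n → ℤ, (∀ i, s i ∣ B.mulVec u i) → (∀ i, s i ∣ B.mulVec v i) →
        ∀ i, s i ∣ B.mulVec (u - v) i := by
      intro u v hu hv i
      rw [Matrix.mulVec_sub]
      exact dvd_sub (hu i) (hv i)
    have hPLadd : ∀ u v : Fin n → ℤ, (∀ i, s i ∣ B.mulVec u i) → (∀ i, s i ∣ B.mulVec v i) →
        ∀ i, s i ∣ B.mulVec (u + v) i := by
      intro u v hu hv i
      rw [Matrix.mulVec_add]
      exact dvd_add (hu i) (hv i)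
    have hPLsmul : ∀ (u : Fin n → ℤ) (c : ℤ), (∀ i, s i ∣ B.mulVec u i) →
        ∀ i, s i ∣ B.mulVec (c • u) i := by
      intro u c hu i
      rw [Matrix.mulVec_smul]
      exact Dvd.dvd.mul_left (hu i) c
    have hPLneg : ∀ u : Fin n → ℤ, (∀ i, s i ∣ B.mulVec u i) →
        ∀ i, s i ∣ B.mulVec (-u) i := by
      intro u hu i
      rw [Matrix.mulVec_neg]
      exact dvd_neg.mpr (hu i)
    have hPL3 : ∀ i, s i ∣ B.mulVec ((3:ℤ) • y) i := by
      have := h3.1.2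
      simpa using this
    have hPL1 : ¬ ∀ i, s i ∣ B.mulVec y i := by
      intro h
      have : (3:ℕ) ≤ 1 := h3.2 ⟨one_pos, by simpa using h⟩
      omega
    have hPL2 : ¬ ∀ i, s i ∣ B.mulVec ((2:ℤ) • y) i := by
      intro h
      have : (3:ℕ) ≤ 2 := h3.2 ⟨two_pos, by simpa using h⟩
      omega
    -- the three cosets and their union
    set E0 : Set (Fin n → ℤ) :=
      {x | (∀ i, s i ∣ B.mulVec x i) ∧ x ⬝ᵥ M.mulVec x = a} with hE0def
    set E1 : Set (Fin n → ℤ) :=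
      {x | (∀ i, s i ∣ B.mulVec (x - y) i) ∧ x ⬝ᵥ M.mulVec x = a} with hE1def
    set E2 : Set (Fin n → ℤ) :=
      {x | (∀ i, s i ∣ B.mulVec (x + y) i) ∧ x ⬝ᵥ M.mulVec x = a} with hE2def
    set EV : Set (Fin n → ℤ) :=
      {x | (∃ c : ℤ, ∀ i, s i ∣ B.mulVec (x - c • y) i) ∧ x ⬝ᵥ M.mulVec x = a} with hEVdef
    have hEV : EV = (E0 ∪ E1) ∪ E2 := by
      ext x
      simp only [hEVdef, hE0def, hE1def, hE2def, Set.mem_union, Set.mem_setOf_eq]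
      constructor
      · rintro ⟨⟨c, hc⟩, hq⟩
        have hr : ∀ i, s i ∣ B.mulVec (x - (c % 3) • y) i := by
          have heq : x - (c % 3) • y = (x - c • y) + (c / 3) • ((3:ℤ) • y) := by
            have h2 : c / 3 * 3 = c - c % 3 := by omega
            rw [smul_smul, h2]
            module
          rw [heq]
          exact hPLadd _ _ hc (hPLsmul _ _ hPL3)
        have hc3 : c % 3 = 0 ∨ c % 3 = 1 ∨ c % 3 = 2 := by omega
        rcases hc3 with h | h | h
        · left; left
          refine ⟨?_, hq⟩
          have := hr
          rw [h] at this
          simpa using this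
        · left; right
          refine ⟨?_, hq⟩
          have := hr
          rw [h] at this
          simpa using this
        · right
          refine ⟨?_, hq⟩
          have heq : x + y = (x - (2:ℤ) • y) + (3:ℤ) • y := by module
          rw [heq]
          apply hPLadd _ _ _ hPL3
          have := hr
          rw [h] at this
          exact this
      · rintro ((⟨h, hq⟩ | ⟨h, hq⟩) | ⟨h, hq⟩)
        · exact ⟨⟨0, by simpa using h⟩, hq⟩
        · exact ⟨⟨1, by simpa using h⟩, hq⟩
        · refine ⟨⟨-1, ?_⟩, hq⟩
          have heq : x - (-1 : ℤ) • y = x + y := by module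
          rw [heq]; exact h
    -- finiteness
    have hfin := qf_finite M hMsymm hMpos a
    have hfin0 : E0.Finite := hfin.subset fun x hx => hx.2
    have hfin1 : E1.Finite := hfin.subset fun x hx => hx.2
    have hfin2 : E2.Finite := hfin.subset fun x hx => hx.2
    -- disjointness
    have hd01 : Disjoint E0 E1 := by
      rw [Set.disjoint_left]
      rintro x ⟨h0, _⟩ ⟨h1, _⟩
      apply hPL1
      have := hPLsub x (x - y) h0 h1
      simpa using this
    have hd02 : Disjoint E0 E2 := by
      rw [Set.disjoint_left]
      rintro x ⟨h0, _⟩ ⟨h2, _⟩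
      apply hPL1
      have := hPLsub (x + y) x h2 h0
      simpa using this
    have hd12 : Disjoint E1 E2 := by
      rw [Set.disjoint_left]
      rintro x ⟨h1, _⟩ ⟨h2, _⟩
      apply hPL2
      have := hPLsub (x + y) (x - y) h2 h1
      have heq : (x + y) - (x - y) = (2:ℤ) • y := by module
      rwa [heq] at this
    -- the quadratic form identity
    have hform : ∀ (W : Matrix (Fin n) (Fin n) ℤ) (z : Fin n → ℤ),
        z ⬝ᵥ (Wᵀ * M * W).mulVec z = (W.mulVec z) ⬝ᵥ M.mulVec (W.mulVec z) := by
      intro W z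
      rw [← Matrix.mulVec_mulVec, ← Matrix.mulVec_mulVec, Matrix.dotProduct_mulVec,
        Matrix.vecMul_transpose]
    -- card of V-count equals card of EV
    have cV : Nat.card {z : Fin n → ℤ // z ⬝ᵥ (Vᵀ * M * V).mulVec z = a} = Nat.card EV := by
      refine Nat.card_congr ((Equiv.subtypeEquivRight fun z => by rw [hform]).trans
        (Equiv.ofBijective (fun z => ⟨V.mulVec z.1, ⟨hV1 z.1, z.2⟩⟩) ⟨?_, ?_⟩))
      · intro z1 z2 h
        exact Subtype.ext (hV3 (congrArg Subtype.val h))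
      · rintro ⟨x, ⟨⟨c, hc⟩, hq⟩⟩
        obtain ⟨z, hz⟩ := hV2 x ⟨c, hc⟩
        exact ⟨⟨z, by rw [hz]; exact hq⟩, Subtype.ext hz⟩
    have cU : Nat.card {z : Fin n → ℤ // z ⬝ᵥ (Uᵀ * M * U).mulVec z = a} = Nat.card E0 := by
      refine Nat.card_congr ((Equiv.subtypeEquivRight fun z => by rw [hform]).trans
        (Equiv.ofBijective (fun z => ⟨U.mulVec z.1, ⟨hU1 z.1, z.2⟩⟩) ⟨?_, ?_⟩))
      · intro z1 z2 h
        exact Subtype.ext (hU3 (congrArg Subtype.val h))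
      · rintro ⟨x, ⟨hc, hq⟩⟩
        obtain ⟨z, hz⟩ := hU2 x hc
        exact ⟨⟨z, by rw [hz]; exact hq⟩, Subtype.ext hz⟩
    -- negation gives a bijection between E1 and E2
    have c12 : Nat.card E1 = Nat.card E2 := by
      have hbij : Set.BijOn (fun x : Fin n → ℤ => -x) E1 E2 := by
        refine ⟨?_, neg_injective.injOn, ?_⟩
        · rintro x ⟨h1, h2⟩
          refine ⟨?_, by rw [hQneg, h2]⟩
          have heq : (-x) + y = -(x - y) := by module
          rw [heq]
          exact hPLneg _ h1
        · rintro x ⟨h1, h2⟩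
          refine ⟨-x, ⟨?_, by rw [hQneg, h2]⟩, by simp⟩
          have heq : (-x) - y = -(x + y) := by module
          rw [heq]
          exact hPLneg _ h1
      exact Nat.card_congr (Set.BijOn.equiv _ hbij)
    -- the LHS set is E1
    have cL : Nat.card {x : Fin n → ℤ //
        (∀ i, s i ∣ (B.mulVec x - w) i) ∧ x ⬝ᵥ M.mulVec x = a} = Nat.card E1 := by
      refine Nat.card_congr (Equiv.subtypeEquivRight fun x => and_congr_left' ?_)
      constructor
      · intro h i
        have heq : B.mulVec (x - y) = (B.mulVec x - w) - (B.mulVec y - w) := by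
          rw [Matrix.mulVec_sub]
          module
        rw [heq]
        exact dvd_sub (h i) (hy i)
      · intro h i
        have heq : B.mulVec x - w = B.mulVec (x - y) + (B.mulVec y - w) := by
          rw [Matrix.mulVec_sub]
          module
        rw [heq]
        exact dvd_add (h i) (hy i)
    -- counting
    have hsum : Nat.card EV = Nat.card E0 + Nat.card E1 + Nat.card E2 := by
      rw [Nat.card_coe_set_eq, Nat.card_coe_set_eq, Nat.card_coe_set_eq,
        Nat.card_coe_set_eq, hEV,
        Set.ncard_union_eq (Set.disjoint_union_left.mpr ⟨hd02, hd12⟩) (hfin0.union hfin1) hfin2,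
        Set.ncard_union_eq hd01 hfin0 hfin1]
    rw [cL, cV, cU, hsum, c12]
    push_cast
    ring
end

section
/- Let n ≥ 1, let M ∈ M_{n×n}(ℤ) be symmetric and positive definite, let B ∈ M_{n×n}(ℤ), and let w, s ∈ ℤⁿ with each sᵢ ≠ 0. Set s = gcd(s₁, s₂, …, sₙ) and assume gcd(det B, s) = 1 and gcd(a, s) = 1 for an integer a. Then for every integer k with gcd(s, k) > 1, there is no x ∈ ℤⁿ with Bx ≡ kw (mod s) (componentwise, sᵢ dividing each coordinate of Bx − kw) and xᵗMx = a. -/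
/-!
A prime `p` dividing both `gcd(s₁, …, sₙ)` and `k` reduces the congruence to `B x ≡ 0 (mod p)`.
Since `p ∤ det B`, multiplying by the adjugate of `B` gives `x ≡ 0 (mod p)`, hence `p ∣ xᵗ M x = a`,
contradicting `gcd(a, s) = 1`.
-/

open Matrix

section

variable {R ι : Type*} [CommRing R] [Fintype ι]

theorem dvd_dotProduct_of_forall_dvd_left {p : R} {x : ι → R} (hx : ∀ i, p ∣ x i) (y : ι → R) :
    p ∣ x ⬝ᵥ y :=
  Finset.dvd_sum fun i _ => (hx i).mul_right _

theorem dvd_mulVec_apply_of_forall_dvd {p : R} {x : ι → R} (hx : ∀ i, p ∣ x i)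
    (A : Matrix ι ι R) (i : ι) : p ∣ (A *ᵥ x) i := by
  rw [mulVec, dotProduct_comm]
  exact dvd_dotProduct_of_forall_dvd_left hx _

theorem dvd_of_dvd_mulVec [DecidableEq ι] {p : R} (hp : Prime p) {B : Matrix ι ι R} (hdet : ¬p ∣ B.det) {x : ι → R}
    (hBx : ∀ i, p ∣ (B *ᵥ x) i) (i : ι) : p ∣ x i := by
  have hadj : B.adjugate *ᵥ (B *ᵥ x) = B.det • x := by
    rw [mulVec_mulVec, adjugate_mul, smul_mulVec, one_mulVec]
  have h := dvd_mulVec_apply_of_forall_dvd hBx B.adjugate i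
  rw [hadj, Pi.smul_apply, smul_eq_mul] at h
  exact (hp.dvd_or_dvd h).resolve_left hdet

theorem dvd_mulVec_of_congr_smul {p k : R} {s w x : ι → R} {B : Matrix ι ι R} (hps : ∀ i, p ∣ s i) (hpk : p ∣ k)
    (hcong : ∀ i, s i ∣ (B *ᵥ x - k • w) i) (i : ι) : p ∣ (B *ᵥ x) i := by
  have h := dvd_add ((hps i).trans (hcong i)) (hpk.mul_right (w i))
  rwa [Pi.sub_apply, Pi.smul_apply, smul_eq_mul, sub_add_cancel] at h

end

theorem Int.not_dvd_of_gcd_eq_one {p a b : ℤ} (hp : Prime p) (hab : Int.gcd a b = 1) (hb : p ∣ b) :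
    ¬p ∣ a := fun ha =>
  hp.not_isUnit <| (Int.isCoprime_iff_gcd_eq_one.mpr hab).isUnit_of_dvd' ha hb

theorem stmt_10_general (n : ℕ)
    (M B : Matrix (Fin n) (Fin n) ℤ)
    (w s : Fin n → ℤ)
    (a : ℤ)
    -- `gcd(det B, s) = 1` and `gcd(a, s) = 1`, where `s = gcd(s₁,…,sₙ)`:
    (hB : Int.gcd B.det (Finset.univ.gcd s) = 1)
    (ha : Int.gcd a (Finset.univ.gcd s) = 1) :
    ∀ k : ℤ, 1 < Int.gcd (Finset.univ.gcd s) k →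
      ¬∃ x : Fin n → ℤ,
        (∀ i, s i ∣ (B.mulVec x - k • w) i) ∧ x ⬝ᵥ M.mulVec x = a := by
  rintro k hk ⟨x, hcong, rfl⟩
  obtain ⟨p, hp, hpd⟩ := Int.exists_prime_and_dvd (n := (Int.gcd (Finset.univ.gcd s) k : ℤ))
    (by simp only [Int.natAbs_natCast]; omega)
  have hpS : p ∣ Finset.univ.gcd s := hpd.trans (Int.gcd_dvd_left _ _)
  have hps : ∀ i, p ∣ s i := fun i => hpS.trans (Finset.gcd_dvd (Finset.mem_univ i))
  have hpx : ∀ i, p ∣ x i :=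
    dvd_of_dvd_mulVec hp (Int.not_dvd_of_gcd_eq_one hp hB hpS)
      (dvd_mulVec_of_congr_smul hps (hpd.trans (Int.gcd_dvd_right _ _)) hcong)
  exact Int.not_dvd_of_gcd_eq_one hp ha hpS (dvd_dotProduct_of_forall_dvd_left hpx _)

theorem stmt_10 (n : ℕ) (hn : 1 ≤ n)
    (M B : Matrix (Fin n) (Fin n) ℤ)
    (hMsymm : M.IsSymm)
    (hMpos : ∀ x : Fin n → ℤ, x ≠ 0 → 0 < x ⬝ᵥ M.mulVec x)
    (w s : Fin n → ℤ) (hs : ∀ i, s i ≠ 0)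
    (a : ℤ)
    -- `gcd(det B, s) = 1` and `gcd(a, s) = 1`, where `s = gcd(s₁,…,sₙ)`:
    (hB : Int.gcd B.det (Finset.univ.gcd s) = 1)
    (ha : Int.gcd a (Finset.univ.gcd s) = 1) :
    ∀ k : ℤ, 1 < Int.gcd (Finset.univ.gcd s) k →
      ¬∃ x : Fin n → ℤ,
        (∀ i, s i ∣ (B.mulVec x - k • w) i) ∧ x ⬝ᵥ M.mulVec x = a :=
  stmt_10_general n M B w s a hB ha
end
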